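/- If a probability measure P on a separable Hadamard space is Wasserstein sticky on a set S, then P is sample sticky on S: for i.i.d. samples (X_i) from P with empirical measures P_n, almost surely there is a random N such that b(P_n) ∈ S for all n ≥ N. -/

import Mathlib

open MeasureTheory ProbabilityTheory Filter Set

class HadamardSpace (M : Type*) [MetricSpace M] : Prop where
  complete : CompleteSpace M
  npc : ∀ x y : M, ∃ m : M, ∀ z : M,
    dist z m ^ 2 ≤ dist z x ^ 2 / 2 + dist z y ^ 2 / 2 - dist x y ^ 2 / 4

noncomputable def W1 {M : Type*} [MetricSpace M] [MeasurableSpace M]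
    (P Q : Measure M) : ℝ :=
  sInf { r : ℝ | ∃ cpl : Measure (M × M), IsProbabilityMeasure cpl ∧
    cpl.map Prod.fst = P ∧ cpl.map Prod.snd = Q ∧ r = ∫ p, dist p.1 p.2 ∂cpl }

noncomputable def empiricalMeasure {M : Type*} [MeasurableSpace M] {Ω : Type*}
    (X : ℕ → Ω → M) (n : ℕ) (ω : Ω) : Measure M :=
  ((n : ENNReal)⁻¹) • ∑ i ∈ Finset.range n, Measure.dirac (X i ω)

/-!
Fix `δ > 0`. Finitely many disjoint cells `C i`, each inside a `δ`-ball around a point `q i`,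
cover all of `M` except a set carrying less than `δ` of the first moment of `P` (cut the cells
from balls around a dense sequence). Two probability measures `P`, `Q` can then be coupled by
matching the common mass `min (P (C i)) (Q (C i))` inside each cell, at total cost `≤ 2δ`, and
routing all remaining mass through a base point `x₀`. This gives
`W₁(P, Q) ≤ 2δ + ∑ i, (d(x₀, q i) + δ) |P(C i) - Q(C i)| + (first moments of P, Q off the cells)`.
For `Q = P_n` the strong law of large numbers makes the cell masses and the off-cell moment
converge to those of `P`, so `W₁(P, P_n) → 0` almost surely, and stickiness puts `b(P_n)` in `S`
for all large `n`.
-/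

open scoped ENNReal Topology Function

section Coupling

variable {α β : Type*} [MeasurableSpace α] [MeasurableSpace β]

def IsCoupling (π : Measure (α × β)) (μ : Measure α) (ν : Measure β) : Prop :=
  π.map Prod.fst = μ ∧ π.map Prod.snd = ν

namespace IsCoupling

lemma zero : IsCoupling (0 : Measure (α × β)) 0 0 := by
  simp [IsCoupling]

lemma add {π π' : Measure (α × β)} {μ μ' : Measure α} {ν ν' : Measure β}
    (h : IsCoupling π μ ν) (h' : IsCoupling π' μ' ν') :
    IsCoupling (π + π') (μ + μ') (ν + ν') :=
  ⟨by rw [Measure.map_add _ _ measurable_fst, h.1, h'.1],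
    by rw [Measure.map_add _ _ measurable_snd, h.2, h'.2]⟩

lemma finsetSum {ι : Type*} {s : Finset ι} {π : ι → Measure (α × β)} {μ : ι → Measure α}
    {ν : ι → Measure β} (h : ∀ i ∈ s, IsCoupling (π i) (μ i) (ν i)) :
    IsCoupling (∑ i ∈ s, π i) (∑ i ∈ s, μ i) (∑ i ∈ s, ν i) := by
  classical
  induction s using Finset.induction_on with
  | empty => simpa using zero
  | insert i s hi ih =>
    simp only [Finset.sum_insert hi]
    exact (h i (s.mem_insert_self i)).add (ih fun j hj => h j (Finset.mem_insert_of_mem hj))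

end IsCoupling

lemma isCoupling_inv_smul_prod (μ : Measure α) (ν : Measure β) [IsFiniteMeasure μ]
    [IsFiniteMeasure ν] (h : μ univ = ν univ) : IsCoupling ((μ univ)⁻¹ • μ.prod ν) μ ν := by
  rcases eq_or_ne (μ univ) 0 with h0 | h0
  · have hν0 : ν univ = 0 := h ▸ h0
    rw [Measure.measure_univ_eq_zero.1 h0, Measure.measure_univ_eq_zero.1 hν0]
    simp [IsCoupling]
  · have hμ : (μ univ)⁻¹ * μ univ = 1 := ENNReal.inv_mul_cancel h0 (measure_ne_top μ univ)
    constructor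
    · rw [Measure.map_smul, Measure.map_fst_prod, smul_smul, ← h, hμ, one_smul]
    · rw [Measure.map_smul, Measure.map_snd_prod, smul_smul, hμ, one_smul]

end Coupling

section Transport

variable {M : Type*} [MetricSpace M] [MeasurableSpace M]

lemma W1_nonneg (P Q : Measure M) : 0 ≤ W1 P Q :=
  Real.sInf_nonneg <| by
    rintro _ ⟨π, -, -, -, rfl⟩
    exact integral_nonneg fun _ => dist_nonneg

variable [OpensMeasurableSpace M]

lemma IsCoupling.lintegral_edist_le {π : Measure (M × M)} {μ ν : Measure M}
    (h : IsCoupling π μ ν) (z : M) :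
    ∫⁻ p, edist p.1 p.2 ∂π ≤ ∫⁻ x, edist z x ∂μ + ∫⁻ y, edist z y ∂ν := by
  have hz : Measurable (edist z) := (continuous_const.edist continuous_id).measurable
  have hz₁ : Measurable fun p : M × M => edist z p.1 := hz.comp measurable_fst
  calc ∫⁻ p, edist p.1 p.2 ∂π ≤ ∫⁻ p, (edist z p.1 + edist z p.2) ∂π :=
        lintegral_mono fun p => edist_triangle_left _ _ _
    _ = ∫⁻ x, edist z x ∂μ + ∫⁻ y, edist z y ∂ν := by
        rw [lintegral_add_left hz₁, ← h.1, ← h.2,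
          lintegral_map hz measurable_fst, lintegral_map hz measurable_snd]

variable [SecondCountableTopology M]

lemma ofReal_W1_le_of_isCoupling {P Q : Measure M} [IsProbabilityMeasure P]
    {π : Measure (M × M)} (h : IsCoupling π P Q) :
    ENNReal.ofReal (W1 P Q) ≤ ∫⁻ p, edist p.1 p.2 ∂π := by
  have : IsProbabilityMeasure π := ⟨by
    simpa [Measure.map_apply measurable_fst MeasurableSet.univ] using congrArg (· univ) h.1⟩
  have hcost : ∫ p, dist p.1 p.2 ∂π = (∫⁻ p, edist p.1 p.2 ∂π).toReal := by
    simp_rw [integral_eq_lintegral_of_nonneg_ae (.of_forall fun _ => dist_nonneg)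
      continuous_dist.aestronglyMeasurable, edist_dist]
  refine ENNReal.ofReal_le_of_le_toReal (hcost ▸ csInf_le ⟨0, ?_⟩ ⟨π, this, h.1, h.2, rfl⟩)
  rintro _ ⟨π', -, -, -, rfl⟩
  exact integral_nonneg fun _ => dist_nonneg

lemma ofReal_W1_le_of_eq_sum {κ : Type*} [Fintype κ] {P Q : Measure M} [IsProbabilityMeasure P]
    {μ ν : κ → Measure M} (hmass : ∀ k, μ k univ = ν k univ) (hP : ∑ k, μ k = P)
    (hQ : ∑ k, ν k = Q) (z : κ → M) :
    ENNReal.ofReal (W1 P Q) ≤ ∑ k, (∫⁻ x, edist (z k) x ∂μ k + ∫⁻ y, edist (z k) y ∂ν k) := by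
  have hμ : ∀ k, IsFiniteMeasure (μ k) := fun k => ⟨by
    refine lt_of_le_of_lt ?_ (measure_lt_top P univ)
    rw [← hP, Measure.coe_finsetSum, Finset.sum_apply]
    exact Finset.single_le_sum (f := fun k => μ k univ) (fun _ _ => zero_le) (Finset.mem_univ k)⟩
  have hν : ∀ k, IsFiniteMeasure (ν k) := fun k =>
    ⟨hmass k ▸ measure_lt_top (μ k) univ⟩
  have hπ := IsCoupling.finsetSum (s := Finset.univ) fun k _ =>
    isCoupling_inv_smul_prod (μ k) (ν k) (hmass k)
  rw [hP, hQ] at hπ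
  refine (ofReal_W1_le_of_isCoupling hπ).trans ?_
  rw [lintegral_finsetSum_measure]
  exact Finset.sum_le_sum fun k _ => (isCoupling_inv_smul_prod _ _ (hmass k)).lintegral_edist_le _

end Transport

namespace MeasureTheory.Measure

variable {α : Type*} [MeasurableSpace α]

noncomputable def withMass (ρ : Measure α) (t : ℝ≥0∞) : Measure α := (t / ρ univ) • ρ

variable {ρ : Measure α} [IsFiniteMeasure ρ] {t : ℝ≥0∞}

lemma withMass_apply_univ (ht : t ≤ ρ univ) : ρ.withMass t univ = t := by
  rcases eq_or_ne (ρ univ) 0 with h0 | h0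
  · simp [withMass, h0, le_zero_iff.1 (h0 ▸ ht)]
  · simp [withMass, ENNReal.div_mul_cancel h0 (measure_ne_top ρ univ)]

lemma withMass_add_withMass (ht : t ≤ ρ univ) :
    ρ.withMass t + ρ.withMass (ρ univ - t) = ρ := by
  rcases eq_or_ne (ρ univ) 0 with h0 | h0
  · simp [withMass, measure_univ_eq_zero.1 h0]
  · rw [withMass, withMass, ← add_smul, ENNReal.div_add_div_same, add_tsub_cancel_of_le ht,
      ENNReal.div_self h0 (measure_ne_top ρ univ), one_smul]

lemma lintegral_withMass_le {f : α → ℝ≥0∞} {K : ℝ≥0∞} (hf : ∫⁻ x, f x ∂ρ ≤ K * ρ univ)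
    (ht : t ≤ ρ univ) : ∫⁻ x, f x ∂ρ.withMass t ≤ K * t := by
  have hmass : t / ρ univ * ρ univ = t := by simpa [withMass] using withMass_apply_univ ht
  calc ∫⁻ x, f x ∂ρ.withMass t = t / ρ univ * ∫⁻ x, f x ∂ρ := lintegral_smul_measure _ _
    _ ≤ t / ρ univ * (K * ρ univ) := by gcongr
    _ = K * t := by rw [mul_left_comm, hmass]

end MeasureTheory.Measure

section Cells

variable {α ι : Type*} [MeasurableSpace α] [Fintype ι]

-- `some i` is the mass `m i` of `ρ` kept inside the cell `C i`; `none` gathers all the rest.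
noncomputable def cellPieces (ρ : Measure α) (C : ι → Set α) (m : ι → ℝ≥0∞) :
    Option ι → Measure α
  | none => ∑ i, (ρ.restrict (C i)).withMass (ρ (C i) - m i) + ρ.restrict (⋃ i, C i)ᶜ
  | some i => (ρ.restrict (C i)).withMass (m i)

variable {ρ : Measure α} [IsFiniteMeasure ρ] {C : ι → Set α} {m : ι → ℝ≥0∞}

lemma cellPieces_some_apply_univ (hm : ∀ i, m i ≤ ρ (C i)) (i : ι) :
    cellPieces ρ C m (some i) univ = m i :=
  Measure.withMass_apply_univ (by simpa using hm i)

lemma sum_cellPieces (hd : Pairwise (Disjoint on C)) (hC : ∀ i, MeasurableSet (C i))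
    (hm : ∀ i, m i ≤ ρ (C i)) : ∑ o, cellPieces ρ C m o = ρ := by
  have hsplit : ∀ i, (ρ.restrict (C i)).withMass (m i)
      + (ρ.restrict (C i)).withMass (ρ (C i) - m i) = ρ.restrict (C i) := fun i => by
    simpa using Measure.withMass_add_withMass (ρ := ρ.restrict (C i)) (by simpa using hm i)
  rw [Fintype.sum_option, cellPieces, add_comm, ← add_assoc]
  simp only [cellPieces]
  rw [← Finset.sum_add_distrib, Finset.sum_congr rfl fun i _ => hsplit i, ← Measure.sum_fintype,
    ← Measure.restrict_iUnion hd hC, Measure.restrict_add_restrict_compl (.iUnion hC)]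

lemma cellPieces_none_apply_univ_add (hd : Pairwise (Disjoint on C))
    (hC : ∀ i, MeasurableSet (C i)) (hm : ∀ i, m i ≤ ρ (C i)) :
    cellPieces ρ C m none univ + ∑ i, m i = ρ univ := by
  conv_rhs => rw [← sum_cellPieces hd hC hm]
  rw [Measure.coe_finsetSum, Finset.sum_apply, Fintype.sum_option]
  simp only [cellPieces_some_apply_univ hm]

end Cells

lemma setLIntegral_le_mul_measure_of_forall_le {α : Type*} [MeasurableSpace α] {μ : Measure α}
    {s : Set α} {f : α → ℝ≥0∞} {K : ℝ≥0∞} (hf : ∀ x ∈ s, f x ≤ K) :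
    ∫⁻ x in s, f x ∂μ ≤ K * μ s :=
  (setLIntegral_mono measurable_const hf).trans_eq (setLIntegral_const s K)

lemma ENNReal.tsub_add_tsub_eq_ofReal_abs {a b : ℝ≥0∞} (ha : a ≠ ∞) (hb : b ≠ ∞) :
    (a - b) + (b - a) = ENNReal.ofReal |a.toReal - b.toReal| := by
  rcases le_total a b with h | h
  · rw [tsub_eq_zero_of_le h, zero_add, abs_sub_comm,
      abs_of_nonneg (sub_nonneg.2 (ENNReal.toReal_mono hb h)), ← ENNReal.toReal_sub_of_le h hb,
      ENNReal.ofReal_toReal (ENNReal.sub_ne_top hb)]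
  · rw [tsub_eq_zero_of_le h, add_zero, abs_of_nonneg (sub_nonneg.2 (ENNReal.toReal_mono ha h)),
      ← ENNReal.toReal_sub_of_le h ha, ENNReal.ofReal_toReal (ENNReal.sub_ne_top ha)]

section CellBound

variable {M ι : Type*} [MetricSpace M] [MeasurableSpace M] [Fintype ι]
  {C : ι → Set M} {q : ι → M} {r : ℝ≥0∞} {m : ι → ℝ≥0∞}

lemma lintegral_edist_cellPieces_some_le (ρ : Measure M) [IsFiniteMeasure ρ]
    (hm : ∀ i, m i ≤ ρ (C i)) (hq : ∀ i, ∀ x ∈ C i, edist (q i) x ≤ r) (i : ι) :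
    ∫⁻ x, edist (q i) x ∂cellPieces ρ C m (some i) ≤ r * m i :=
  Measure.lintegral_withMass_le (by simpa using setLIntegral_le_mul_measure_of_forall_le (hq i))
    (by simpa using hm i)

lemma lintegral_edist_cellPieces_none_le (ρ : Measure M) [IsFiniteMeasure ρ]
    (hq : ∀ i, ∀ x ∈ C i, edist (q i) x ≤ r) (x₀ : M) :
    ∫⁻ x, edist x₀ x ∂cellPieces ρ C m none ≤
      ∑ i, (edist x₀ (q i) + r) * (ρ (C i) - m i) + ∫⁻ x in (⋃ i, C i)ᶜ, edist x₀ x ∂ρ := by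
  rw [cellPieces, lintegral_add_measure, lintegral_finsetSum_measure]
  gcongr with i
  refine Measure.lintegral_withMass_le ?_ (by simp)
  simpa using setLIntegral_le_mul_measure_of_forall_le fun x hx =>
    (edist_triangle x₀ (q i) x).trans (add_le_add le_rfl (hq i x hx))

variable [OpensMeasurableSpace M] [SecondCountableTopology M]

lemma ofReal_W1_le_of_cells (P Q : Measure M) [IsProbabilityMeasure P] [IsProbabilityMeasure Q]
    (hd : Pairwise (Disjoint on C)) (hC : ∀ i, MeasurableSet (C i))
    (hq : ∀ i, ∀ x ∈ C i, edist (q i) x ≤ r) (x₀ : M) :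
    ENNReal.ofReal (W1 P Q) ≤ 2 * r
      + ∑ i, (edist x₀ (q i) + r) * ((P (C i) - Q (C i)) + (Q (C i) - P (C i)))
      + ∫⁻ x in (⋃ i, C i)ᶜ, edist x₀ x ∂P + ∫⁻ x in (⋃ i, C i)ᶜ, edist x₀ x ∂Q := by
  set m : ι → ℝ≥0∞ := fun i => min (P (C i)) (Q (C i))
  have hmP : ∀ i, m i ≤ P (C i) := fun i => min_le_left _ _
  have hmQ : ∀ i, m i ≤ Q (C i) := fun i => min_le_right _ _
  have hP := cellPieces_none_apply_univ_add hd hC hmP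
  have hQ := cellPieces_none_apply_univ_add hd hC hmQ
  rw [measure_univ (μ := P)] at hP
  rw [measure_univ (μ := Q)] at hQ
  have hsum : ∑ i, m i ≤ 1 := hP ▸ le_add_self
  have hmass : ∀ o, cellPieces P C m o univ = cellPieces Q C m o univ
    | none => (ENNReal.add_left_inj (ne_top_of_le_ne_top ENNReal.one_ne_top hsum)).1
        (hP.trans hQ.symm)
    | some i => by rw [cellPieces_some_apply_univ hmP, cellPieces_some_apply_univ hmQ]
  have hPm : ∀ i, P (C i) - m i = P (C i) - Q (C i) := fun i => tsub_min
  have hQm : ∀ i, Q (C i) - m i = Q (C i) - P (C i) := fun i => by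
    rw [show m i = min (Q (C i)) (P (C i)) from min_comm _ _]; exact tsub_min
  refine (ofReal_W1_le_of_eq_sum hmass (sum_cellPieces hd hC hmP) (sum_cellPieces hd hC hmQ)
    (fun o => o.elim x₀ q)).trans ?_
  rw [Fintype.sum_option]
  calc _ ≤ (∑ i, (edist x₀ (q i) + r) * (P (C i) - m i) + ∫⁻ x in (⋃ i, C i)ᶜ, edist x₀ x ∂P
          + (∑ i, (edist x₀ (q i) + r) * (Q (C i) - m i)
            + ∫⁻ x in (⋃ i, C i)ᶜ, edist x₀ x ∂Q)) + ∑ i, (r * m i + r * m i) :=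
        add_le_add (add_le_add (lintegral_edist_cellPieces_none_le P hq x₀)
          (lintegral_edist_cellPieces_none_le Q hq x₀))
          (Finset.sum_le_sum fun i _ => add_le_add (lintegral_edist_cellPieces_some_le P hmP hq i)
            (lintegral_edist_cellPieces_some_le Q hmQ hq i))
    _ = 2 * r * ∑ i, m i
          + ∑ i, (edist x₀ (q i) + r) * ((P (C i) - Q (C i)) + (Q (C i) - P (C i)))
          + ∫⁻ x in (⋃ i, C i)ᶜ, edist x₀ x ∂P + ∫⁻ x in (⋃ i, C i)ᶜ, edist x₀ x ∂Q := by
        simp only [hPm, hQm, mul_add, Finset.sum_add_distrib, ← Finset.mul_sum]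
        ring
    _ ≤ _ := by
        gcongr ?_ + _ + _ + _
        exact mul_le_of_le_one_right zero_le hsum

lemma W1_le_of_cells (P Q : Measure M) [IsProbabilityMeasure P] [IsProbabilityMeasure Q]
    (hd : Pairwise (Disjoint on C)) (hC : ∀ i, MeasurableSet (C i)) {δ : ℝ} (hδ : 0 ≤ δ)
    (hq : ∀ i, C i ⊆ Metric.closedBall (q i) δ) (x₀ : M) (hPx : Integrable (dist x₀) P)
    (hQx : Integrable (dist x₀) Q) :
    W1 P Q ≤ 2 * δ + ∑ i, (dist x₀ (q i) + δ) * |P.real (C i) - Q.real (C i)|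
      + ∫ x in (⋃ i, C i)ᶜ, dist x₀ x ∂P + ∫ x in (⋃ i, C i)ᶜ, dist x₀ x ∂Q := by
  have htail : ∀ μ : Measure M, Integrable (dist x₀) μ →
      ∫⁻ x in (⋃ i, C i)ᶜ, edist x₀ x ∂μ = ENNReal.ofReal (∫ x in (⋃ i, C i)ᶜ, dist x₀ x ∂μ) :=
    fun μ hμ => by
      simp_rw [edist_dist]
      exact (ofReal_integral_eq_lintegral_ofReal hμ.restrict (.of_forall fun _ => dist_nonneg)).symm
  have hcell : ∀ i,
      (edist x₀ (q i) + ENNReal.ofReal δ) * ((P (C i) - Q (C i)) + (Q (C i) - P (C i)))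
        = ENNReal.ofReal ((dist x₀ (q i) + δ) * |P.real (C i) - Q.real (C i)|) := fun i => by
    rw [ENNReal.tsub_add_tsub_eq_ofReal_abs (measure_ne_top _ _) (measure_ne_top _ _), edist_dist,
      ← ENNReal.ofReal_add dist_nonneg hδ, ← ENNReal.ofReal_mul (by positivity)]
    rfl
  have h := ofReal_W1_le_of_cells P Q hd hC (r := ENNReal.ofReal δ)
    (fun i x hx => (edist_le_ofReal hδ).2 (Metric.mem_closedBall'.1 (hq i hx))) x₀
  have hPt : 0 ≤ ∫ x in (⋃ i, C i)ᶜ, dist x₀ x ∂P := by positivity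
  have hQt : 0 ≤ ∫ x in (⋃ i, C i)ᶜ, dist x₀ x ∂Q := by positivity
  have hsum : 0 ≤ ∑ i, (dist x₀ (q i) + δ) * |P.real (C i) - Q.real (C i)| := by positivity
  rw [← ENNReal.ofReal_le_ofReal_iff (by positivity)]
  refine h.trans_eq ?_
  rw [htail P hPx, htail Q hQx, Finset.sum_congr rfl fun i _ => hcell i,
    ← ENNReal.ofReal_sum_of_nonneg fun i _ => by positivity, ENNReal.ofReal_add (by positivity) hQt,
    ENNReal.ofReal_add (by positivity) hPt, ENNReal.ofReal_add (by positivity) hsum,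
    ENNReal.ofReal_mul zero_le_two, ENNReal.ofReal_ofNat]

end CellBound

lemma tendsto_setIntegral_compl_of_monotone {α E : Type*} [MeasurableSpace α]
    [NormedAddCommGroup E] [NormedSpace ℝ E] {μ : Measure α} {f : α → E} (hf : Integrable f μ)
    {s : ℕ → Set α} (hs : ∀ n, MeasurableSet (s n)) (hmono : Monotone s)
    (hcover : ⋃ n, s n = univ) :
    Tendsto (fun n => ∫ x in (s n)ᶜ, f x ∂μ) atTop (𝓝 0) := by
  have h := tendsto_setIntegral_of_antitone (μ := μ) (f := f) (fun n => (hs n).compl)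
    (fun _ _ hmn => compl_subset_compl.2 (hmono hmn)) ⟨0, hf.integrableOn⟩
  rwa [← compl_iUnion, hcover, compl_univ, Measure.restrict_empty, integral_zero_measure] at h

lemma exists_cells_setIntegral_compl_lt {M : Type*} [MetricSpace M]
    [TopologicalSpace.SeparableSpace M] [Nonempty M] [MeasurableSpace M] [OpensMeasurableSpace M]
    {P : Measure M} {f : M → ℝ} (hf : Integrable f P) {δ η : ℝ} (hδ : 0 < δ) (hη : 0 < η) :
    ∃ (J : ℕ) (C : Fin J → Set M) (q : Fin J → M), Pairwise (Disjoint on C) ∧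
      (∀ i, MeasurableSet (C i)) ∧ (∀ i, C i ⊆ Metric.closedBall (q i) δ) ∧
      ∫ x in (⋃ i, C i)ᶜ, f x ∂P < η := by
  set q := TopologicalSpace.denseSeq M
  set B : ℕ → Set M := fun j => Metric.ball (q j) δ
  have hB : ∀ j, MeasurableSet (disjointed B j) :=
    MeasurableSet.disjointed fun _ => measurableSet_ball
  set U : ℕ → Set M := fun J => ⋃ i : Fin J, disjointed B i
  have hmono : Monotone U := fun J J' h =>
    iUnion_subset fun i => subset_iUnion_of_subset (Fin.castLE h i) subset_rfl
  have hcover : ⋃ J, U J = univ := by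
    refine eq_univ_of_forall fun x => ?_
    obtain ⟨j, hj⟩ := Metric.denseRange_iff.1 (TopologicalSpace.denseRange_denseSeq M) x δ hδ
    obtain ⟨k, hk⟩ := mem_iUnion.1 ((iUnion_disjointed (f := B)).symm ▸ mem_iUnion.2 ⟨j, hj⟩ :
      x ∈ ⋃ k, disjointed B k)
    exact mem_iUnion.2 ⟨k + 1, mem_iUnion.2 ⟨Fin.last k, hk⟩⟩
  obtain ⟨J, hJ⟩ := ((tendsto_setIntegral_compl_of_monotone (s := U) hf
    (fun J => .iUnion fun i => hB i) hmono hcover).eventually (gt_mem_nhds hη)).exists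
  exact ⟨J, fun i => disjointed B i, fun i => q i,
    fun i i' h => disjoint_disjointed B (Fin.val_injective.ne h), fun i => hB i,
    fun i => (disjointed_subset B i).trans Metric.ball_subset_closedBall, hJ⟩

section Empirical

variable {M Ω : Type*} [MeasurableSpace M]

lemma isProbabilityMeasure_empiricalMeasure (X : ℕ → Ω → M) (ω : Ω) {n : ℕ} (hn : n ≠ 0) :
    IsProbabilityMeasure (empiricalMeasure X n ω) :=
  ⟨by simp [empiricalMeasure, ENNReal.inv_mul_cancel (Nat.cast_ne_zero.2 hn)
    (ENNReal.natCast_ne_top n)]⟩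

variable [MeasurableSingletonClass M] {E : Type*} [NormedAddCommGroup E]

lemma integrable_empiricalMeasure (X : ℕ → Ω → M) (ω : Ω) (n : ℕ) (f : M → E) :
    Integrable f (empiricalMeasure X n ω) := by
  rcases eq_or_ne n 0 with rfl | hn
  · simp [empiricalMeasure]
  · exact (integrable_finsetSum_measure.2 fun i _ => integrable_dirac enorm_lt_top).smul_measure
      (by simpa using hn)

lemma integral_empiricalMeasure [NormedSpace ℝ E] [CompleteSpace E] (X : ℕ → Ω → M) (ω : Ω)
    (n : ℕ) (f : M → E) :
    ∫ y, f y ∂empiricalMeasure X n ω = (n : ℝ)⁻¹ • ∑ i ∈ Finset.range n, f (X i ω) := by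
  rw [empiricalMeasure, integral_smul_measure,
    integral_finsetSum_measure fun i _ => integrable_dirac enorm_lt_top]
  simp [integral_dirac]

lemma ae_tendsto_integral_empiricalMeasure [MeasureSpace Ω] {X : ℕ → Ω → M}
    (hmeas : ∀ i, Measurable (X i)) (hindep : Pairwise ((IndepFun · · ℙ) on X))
    {P : Measure M} (hlaw : ∀ i, Measure.map (X i) ℙ = P) {f : M → ℝ} (hf : Measurable f)
    (hint : Integrable f P) :
    ∀ᵐ ω ∂ℙ, Tendsto (fun n => ∫ y, f y ∂empiricalMeasure X n ω) atTop (𝓝 (∫ y, f y ∂P)) := by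
  have hident : ∀ i, IdentDistrib (X i) (X 0) ℙ ℙ := fun i =>
    ⟨(hmeas i).aemeasurable, (hmeas 0).aemeasurable, by rw [hlaw, hlaw]⟩
  have h := strong_law_ae (fun i => f ∘ X i) ((hlaw 0 ▸ hint).comp_measurable (hmeas 0))
    (fun i j hij => (hindep hij).comp hf hf) fun i => (hident i).comp hf
  rw [← hlaw 0, integral_map (hmeas 0).aemeasurable hf.aestronglyMeasurable]
  simpa only [integral_empiricalMeasure, Function.comp_apply] using h

end Empirical

section Convergence

variable {M Ω : Type*} [MetricSpace M] [TopologicalSpace.SeparableSpace M] [MeasurableSpace M]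
  [OpensMeasurableSpace M] [MeasureSpace Ω]

lemma ae_eventually_W1_empiricalMeasure_lt {P : Measure M} [IsProbabilityMeasure P]
    (hP : ∀ z, Integrable (fun y => dist z y) P) {X : ℕ → Ω → M} (hmeas : ∀ i, Measurable (X i))
    (hindep : Pairwise ((IndepFun · · ℙ) on X)) (hlaw : ∀ i, Measure.map (X i) ℙ = P) {ε : ℝ}
    (hε : 0 < ε) :
    ∀ᵐ ω ∂ℙ, ∀ᶠ n in atTop, W1 P (empiricalMeasure X n ω) < ε := by
  have := nonempty_of_isProbabilityMeasure P
  let x₀ : M := Classical.arbitrary M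
  set δ := ε / 4 with hδ
  obtain ⟨J, C, q, hd, hC, hq, htail⟩ :=
    exists_cells_setIntegral_compl_lt (hP x₀) (by positivity : 0 < δ) (by positivity : 0 < δ)
  set U := ⋃ i, C i
  have hU : MeasurableSet Uᶜ := (MeasurableSet.iUnion hC).compl
  have hcell : ∀ᵐ ω ∂ℙ, ∀ i, Tendsto (fun n => (empiricalMeasure X n ω).real (C i)) atTop
      (𝓝 (P.real (C i))) := ae_all_iff.2 fun i => by
    simpa only [integral_indicator_one (hC i)] using ae_tendsto_integral_empiricalMeasure hmeas
      hindep hlaw (f := (C i).indicator 1) (measurable_const.indicator (hC i))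
      ((integrable_const 1).indicator (hC i))
  have htailn : ∀ᵐ ω ∂ℙ, Tendsto (fun n => ∫ x in Uᶜ, dist x₀ x ∂empiricalMeasure X n ω)
      atTop (𝓝 (∫ x in Uᶜ, dist x₀ x ∂P)) := by
    simpa only [integral_indicator hU] using ae_tendsto_integral_empiricalMeasure hmeas hindep
      hlaw (f := Uᶜ.indicator fun x => dist x₀ x)
      ((continuous_const.dist continuous_id).measurable.indicator hU) ((hP x₀).indicator hU)
  filter_upwards [hcell, htailn] with ω hω htω
  have hlim : Tendsto (fun n => 2 * δ
      + ∑ i, (dist x₀ (q i) + δ) * |P.real (C i) - (empiricalMeasure X n ω).real (C i)|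
      + ∫ x in Uᶜ, dist x₀ x ∂P + ∫ x in Uᶜ, dist x₀ x ∂empiricalMeasure X n ω) atTop
      (𝓝 (2 * δ + ∑ i, (dist x₀ (q i) + δ) * |P.real (C i) - P.real (C i)|
        + ∫ x in Uᶜ, dist x₀ x ∂P + ∫ x in Uᶜ, dist x₀ x ∂P)) :=
    ((tendsto_const_nhds.add (tendsto_finsetSum _ fun i _ =>
      ((tendsto_const_nhds.sub (hω i)).abs.const_mul _))).add tendsto_const_nhds).add htω
  simp only [sub_self, abs_zero, mul_zero, Finset.sum_const_zero, add_zero] at hlim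
  filter_upwards [hlim.eventually_lt_const (show _ < ε by linarith), eventually_ne_atTop 0]
    with n hn hn0
  have := isProbabilityMeasure_empiricalMeasure X ω hn0
  exact (W1_le_of_cells P _ hd hC (by positivity) hq x₀ (hP x₀)
    (integrable_empiricalMeasure X ω n _)).trans_lt hn

lemma ae_tendsto_W1_empiricalMeasure {P : Measure M} [IsProbabilityMeasure P]
    (hP : ∀ z, Integrable (fun y => dist z y) P) {X : ℕ → Ω → M} (hmeas : ∀ i, Measurable (X i))
    (hindep : Pairwise ((IndepFun · · ℙ) on X)) (hlaw : ∀ i, Measure.map (X i) ℙ = P) :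
    ∀ᵐ ω ∂ℙ, Tendsto (fun n => W1 P (empiricalMeasure X n ω)) atTop (𝓝 0) := by
  have h : ∀ᵐ ω ∂ℙ, ∀ k : ℕ, ∀ᶠ n in atTop, W1 P (empiricalMeasure X n ω) < 1 / (k + 1) :=
    ae_all_iff.2 fun k => ae_eventually_W1_empiricalMeasure_lt hP hmeas hindep hlaw
      Nat.one_div_pos_of_nat
  filter_upwards [h] with ω hω
  refine tendsto_order.2 ⟨fun a ha => .of_forall fun n => ha.trans_le (W1_nonneg _ _),
    fun a ha => ?_⟩
  obtain ⟨k, hk⟩ := exists_nat_one_div_lt ha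
  exact (hω k).mono fun n hn => hn.trans hk

end Convergence

theorem wasserstein_sticky_implies_sample_sticky_general
    {M : Type*} [MetricSpace M] [TopologicalSpace.SeparableSpace M]
    [MeasurableSpace M] [BorelSpace M]
    {Ω : Type*} [MeasureSpace Ω]
    (S : Set M)
    (b : Measure M → M)
    (P : Measure M) [IsProbabilityMeasure P]
    (hP : ∀ z : M, Integrable (fun y => dist z y) P)
    (hsticky : ∃ ε > (0:ℝ), ∀ (Q : Measure M), IsProbabilityMeasure Q →
      (∀ z : M, Integrable (fun y => dist z y) Q) → W1 P Q < ε → b Q ∈ S)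
    (X : ℕ → Ω → M)
    (hmeas : ∀ i, Measurable (X i))
    (hindep : iIndepFun X ℙ)
    (hlaw : ∀ i, Measure.map (X i) ℙ = P) :
    ∀ᵐ ω ∂ℙ, ∃ N : ℕ, ∀ n ≥ N, b (empiricalMeasure X n ω) ∈ S := by
  obtain ⟨ε, hε, hS⟩ := hsticky
  filter_upwards [ae_tendsto_W1_empiricalMeasure hP hmeas (fun _ _ hij => hindep.indepFun hij)
    hlaw] with ω hω
  obtain ⟨N, hN⟩ :=
    eventually_atTop.1 ((hω.eventually (gt_mem_nhds hε)).and (eventually_ne_atTop 0))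
  exact ⟨N, fun n hn => hS _ (isProbabilityMeasure_empiricalMeasure X ω (hN n hn).2)
    (fun _ => integrable_empiricalMeasure X ω n _) (hN n hn).1⟩

/-- If P is Wasserstein sticky on a set S in a separable Hadamard space, then P
is sample sticky on S: for i.i.d. samples from P, almost surely there is a
random N such that the empirical Fréchet mean b(P_n) lies in S for all n ≥ N. -/
theorem wasserstein_sticky_implies_sample_sticky
    {M : Type*} [MetricSpace M] [HadamardSpace M] [TopologicalSpace.SeparableSpace M]
    [MeasurableSpace M] [BorelSpace M]
    {Ω : Type*} [MeasureSpace Ω] [IsProbabilityMeasure (ℙ : Measure Ω)]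
    (S : Set M)
    (b : Measure M → M)
    (hb : ∀ (R : Measure M), IsProbabilityMeasure R →
      (∀ z : M, Integrable (fun y => dist z y) R) →
      ∀ x : M, (1 / 2 : ℝ) * ∫ y, (dist (b R) y ^ 2 - dist (b R) y ^ 2) ∂ R ≤
        (1 / 2 : ℝ) * ∫ y, (dist x y ^ 2 - dist (b R) y ^ 2) ∂ R)
    (P : Measure M) [IsProbabilityMeasure P]
    (hP : ∀ z : M, Integrable (fun y => dist z y) P)
    (hsticky : ∃ ε > (0:ℝ), ∀ (Q : Measure M), IsProbabilityMeasure Q →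
      (∀ z : M, Integrable (fun y => dist z y) Q) → W1 P Q < ε → b Q ∈ S)
    (X : ℕ → Ω → M)
    (hmeas : ∀ i, Measurable (X i))
    (hindep : iIndepFun X ℙ)
    (hlaw : ∀ i, Measure.map (X i) ℙ = P) :
    ∀ᵐ ω ∂ℙ, ∃ N : ℕ, ∀ n ≥ N, b (empiricalMeasure X n ω) ∈ S :=
  wasserstein_sticky_implies_sample_sticky_general S b P hP hsticky X hmeas hindep hlaw
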